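/- The deformed product is associative in the sense of formal power series in θ: for every k ∈ ℕ and all smooth f, g, h : ℝ³ → ℂ, Σ_{j+l=k} c_j(c_l(f,g), h) = Σ_{j+l=k} c_j(f, c_l(g,h)) as functions on ℝ³, where c_k are the coefficient bilinear differential operators of the deformed product. Equivalently, the θ^k-coefficients of (f ⋆ g) ⋆ h and f ⋆ (g ⋆ h) coincide for every order k. -/

import Mathlib

open MeasureTheory Real
set_option synthInstance.maxHeartbeats 1000000
set_option maxHeartbeats 2000000

noncomputable section

abbrev P3 := ℝ × ℝ × ℝ

/-- Partial derivative in the first (V) coordinate. -/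
def pdV (f : P3 → ℂ) (p : P3) : ℂ :=
  deriv (fun v : ℝ => f (v, p.2.1, p.2.2)) p.1

/-- Partial derivative in the third (φ) coordinate. -/
def pdPhi (f : P3 → ℂ) (p : P3) : ℂ :=
  deriv (fun s : ℝ => f (p.1, p.2.1, s)) p.2.2

/-- Euler operator E = V·∂_V. -/
def euler (f : P3 → ℂ) (p : P3) : ℂ := (p.1 : ℂ) * pdV f p

def pdX (u : P3 × P3 → ℂ) (q : P3 × P3) : ℂ :=
  deriv (fun x : ℝ => u ((x, q.1.2.1, q.1.2.2), q.2)) q.1.1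

def pdXi (u : P3 × P3 → ℂ) (q : P3 × P3) : ℂ :=
  deriv (fun s : ℝ => u ((q.1.1, q.1.2.1, s), q.2)) q.1.2.2

def pdY (u : P3 × P3 → ℂ) (q : P3 × P3) : ℂ :=
  deriv (fun y : ℝ => u (q.1, (y, q.2.2.1, q.2.2.2))) q.2.1

def pdEta (u : P3 × P3 → ℂ) (q : P3 × P3) : ℂ :=
  deriv (fun s : ℝ => u (q.1, (q.2.1, q.2.2.1, s))) q.2.2.2

/-- The operator D: (Du)((X,ϑ₁,ξ),(Y,ϑ₂,η)) = X·∂_X∂_η u − Y·∂_Y∂_ξ u. -/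
def Dop (u : P3 × P3 → ℂ) : P3 × P3 → ℂ :=
  fun q => (q.1.1 : ℂ) * pdX (pdEta u) q - (q.2.1 : ℂ) * pdY (pdXi u) q

def tensorF (f g : P3 → ℂ) : P3 × P3 → ℂ := fun q => f q.1 * g q.2

/-- Order-N deformed product: (f ⋆_{θ,N} g)(p) = Σ_{k=0}^{N} ((iθ)^k/k!)·(D^k F)(p,p). -/
def starN (θ : ℝ) (N : ℕ) (f g : P3 → ℂ) : P3 → ℂ :=
  fun p => ∑ k ∈ Finset.range (N + 1),
    ((Complex.I * (θ : ℂ)) ^ k / (Nat.factorial k : ℂ)) * (Dop^[k] (tensorF f g)) (p, p)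

/-- Coefficient bilinear differential operators of the deformed product:
c_k(f,g)(p) := (i^k/k!)·(D^k F)(p,p), so that f ⋆_{θ,N} g = Σ_{k≤N} θ^k·c_k(f,g). -/
def coeffC (k : ℕ) (f g : P3 → ℂ) : P3 → ℂ :=
  fun p => (Complex.I ^ k / (Nat.factorial k : ℂ)) * (Dop^[k] (tensorF f g)) (p, p)


abbrev Q6 := P3 × P3

lemma deriv_along {E : Type*} [NormedAddCommGroup E] [NormedSpace ℝ E]
    (u : E → ℂ) {c : ℝ → E} {v : E} {t : ℝ}
    (hu : DifferentiableAt ℝ u (c t)) (hc : HasDerivAt c v t) :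
    deriv (fun s => u (c s)) t = fderiv ℝ u (c t) v :=
  (hu.hasFDerivAt.comp_hasDerivAt t hc).deriv

lemma deriv_fderiv_along {E : Type*} [NormedAddCommGroup E] [NormedSpace ℝ E]
    (u : E → ℂ) (hu : ContDiff ℝ (⊤ : ℕ∞) u) {c : ℝ → E} {v : E} {t : ℝ}
    (hc : HasDerivAt c v t) (w : E) :
    deriv (fun s => fderiv ℝ u (c s) w) t = fderiv ℝ (fderiv ℝ u) (c t) v w := by
  have h1 : ContDiff ℝ (⊤ : ℕ∞) (fderiv ℝ u) := hu.fderiv_right (by simp)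
  have h2 : DifferentiableAt ℝ (fderiv ℝ u) (c t) := h1.differentiable (by simp) _
  have h3 : HasDerivAt (fun s => fderiv ℝ u (c s))
      (fderiv ℝ (fderiv ℝ u) (c t) v) t := h2.hasFDerivAt.comp_hasDerivAt t hc
  have h4 := (ContinuousLinearMap.apply ℝ ℂ w).hasFDerivAt.comp_hasDerivAt t h3
  exact h4.deriv

-- curves
lemma curveV (p : P3) : HasDerivAt (fun v : ℝ => ((v, p.2.1, p.2.2) : P3)) (1, 0, 0) p.1 := by
  have := HasDerivAt.prodMk (hasDerivAt_id p.1) (hasDerivAt_const p.1 ((p.2.1, p.2.2) : ℝ × ℝ))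
  exact this

lemma curvePhi (p : P3) : HasDerivAt (fun s : ℝ => ((p.1, p.2.1, s) : P3)) (0, 0, 1) p.2.2 := by
  have := HasDerivAt.prodMk (hasDerivAt_const p.2.2 p.1)
    (HasDerivAt.prodMk (hasDerivAt_const p.2.2 p.2.1) (hasDerivAt_id p.2.2))
  simpa using this

lemma pdV_eq {f : P3 → ℂ} (hf : DifferentiableAt ℝ f p) :
    pdV f p = fderiv ℝ f p (1, 0, 0) := by
  have := deriv_along f (c := fun v : ℝ => ((v, p.2.1, p.2.2) : P3)) (by simpa using hf) (curveV p)
  simpa [pdV] using this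

lemma pdPhi_eq {f : P3 → ℂ} (hf : DifferentiableAt ℝ f p) :
    pdPhi f p = fderiv ℝ f p (0, 0, 1) := by
  have := deriv_along f (c := fun s : ℝ => ((p.1, p.2.1, s) : P3)) (by simpa using hf) (curvePhi p)
  simpa [pdPhi] using this

lemma smooth_pdV {f : P3 → ℂ} (hf : ContDiff ℝ (⊤ : ℕ∞) f) : ContDiff ℝ (⊤ : ℕ∞) (pdV f) := by
  have : pdV f = fun p => fderiv ℝ f p (1, 0, 0) := by
    funext p; exact pdV_eq (hf.differentiable (by simp) p)
  rw [this]
  exact (hf.fderiv_right (by simp)).clm_apply contDiff_const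

lemma smooth_pdPhi {f : P3 → ℂ} (hf : ContDiff ℝ (⊤ : ℕ∞) f) : ContDiff ℝ (⊤ : ℕ∞) (pdPhi f) := by
  have : pdPhi f = fun p => fderiv ℝ f p (0, 0, 1) := by
    funext p; exact pdPhi_eq (hf.differentiable (by simp) p)
  rw [this]
  exact (hf.fderiv_right (by simp)).clm_apply contDiff_const

lemma smooth_euler {f : P3 → ℂ} (hf : ContDiff ℝ (⊤ : ℕ∞) f) : ContDiff ℝ (⊤ : ℕ∞) (euler f) := by
  exact (Complex.ofRealCLM.contDiff.comp contDiff_fst).mul (smooth_pdV hf)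

-- commutation
lemma pdPhi_pdV_comm {f : P3 → ℂ} (hf : ContDiff ℝ (⊤ : ℕ∞) f) :
    pdPhi (pdV f) = pdV (pdPhi f) := by
  funext p
  have hdiff : Differentiable ℝ f := hf.differentiable (by simp)
  have h1 : ContDiff ℝ (⊤ : ℕ∞) (fderiv ℝ f) := hf.fderiv_right (by simp)
  have hVeq : pdV f = fun q => fderiv ℝ f q (1, 0, 0) := by
    funext q; exact pdV_eq (hdiff q)
  have hPeq : pdPhi f = fun q => fderiv ℝ f q (0, 0, 1) := by
    funext q; exact pdPhi_eq (hdiff q)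
  have lhs : pdPhi (pdV f) p = fderiv ℝ (fderiv ℝ f) p (0, 0, 1) (1, 0, 0) := by
    rw [hVeq]
    show deriv (fun s => fderiv ℝ f ((p.1, p.2.1, s) : P3) (1,0,0)) p.2.2 = _
    have := deriv_fderiv_along f hf (curvePhi p) (1, 0, 0)
    simpa using this
  have rhs : pdV (pdPhi f) p = fderiv ℝ (fderiv ℝ f) p (1, 0, 0) (0, 0, 1) := by
    rw [hPeq]
    show deriv (fun v => fderiv ℝ f ((v, p.2.1, p.2.2) : P3) (0,0,1)) p.1 = _
    have := deriv_fderiv_along f hf (curveV p) (0, 0, 1)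
    simpa using this
  rw [lhs, rhs]
  exact second_derivative_symmetric (fun y => (hdiff y).hasFDerivAt)
    ((h1.differentiable (by simp) p).hasFDerivAt) _ _

lemma sliceV_diff {f : P3 → ℂ} (hf : Differentiable ℝ f) (p : P3) :
    DifferentiableAt ℝ (fun v : ℝ => f (v, p.2.1, p.2.2)) p.1 := by
  have : DifferentiableAt ℝ f ((fun v : ℝ => ((v, p.2.1, p.2.2) : P3)) p.1) := by
    simpa using hf _
  exact this.comp p.1 (curveV p).differentiableAt

lemma slicePhi_diff {f : P3 → ℂ} (hf : Differentiable ℝ f) (p : P3) :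
    DifferentiableAt ℝ (fun s : ℝ => f (p.1, p.2.1, s)) p.2.2 := by
  have : DifferentiableAt ℝ f ((fun s : ℝ => ((p.1, p.2.1, s) : P3)) p.2.2) := by
    simpa using hf _
  exact this.comp p.2.2 (curvePhi p).differentiableAt

-- linearity (pointwise, for differentiable)
lemma pdV_add {f g : P3 → ℂ} (hf : Differentiable ℝ f) (hg : Differentiable ℝ g) :
    pdV (f + g) = fun p => pdV f p + pdV g p := by
  funext p
  have : (fun v : ℝ => (f + g) (v, p.2.1, p.2.2))
      = fun v => f (v, p.2.1, p.2.2) + g (v, p.2.1, p.2.2) := rfl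
  rw [pdV, this, deriv_fun_add (sliceV_diff hf p) (sliceV_diff hg p)]; rfl

lemma pdPhi_add {f g : P3 → ℂ} (hf : Differentiable ℝ f) (hg : Differentiable ℝ g) :
    pdPhi (f + g) = fun p => pdPhi f p + pdPhi g p := by
  funext p
  have : (fun s : ℝ => (f + g) (p.1, p.2.1, s))
      = fun s => f (p.1, p.2.1, s) + g (p.1, p.2.1, s) := rfl
  rw [pdPhi, this, deriv_fun_add (slicePhi_diff hf p) (slicePhi_diff hg p)]; rfl

lemma pdV_smul (c : ℂ) (f : P3 → ℂ) : pdV (c • f) = fun p => c * pdV f p := by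
  funext p
  have : (fun v : ℝ => (c • f) (v, p.2.1, p.2.2)) = fun v => c * f (v, p.2.1, p.2.2) := rfl
  rw [pdV, this, deriv_const_mul_field]; rfl

lemma pdPhi_smul (c : ℂ) (f : P3 → ℂ) : pdPhi (c • f) = fun p => c * pdPhi f p := by
  funext p
  have : (fun s : ℝ => (c • f) (p.1, p.2.1, s)) = fun s => c * f (p.1, p.2.1, s) := rfl
  rw [pdPhi, this, deriv_const_mul_field]; rfl

-- Leibniz
lemma pdV_mul {f g : P3 → ℂ} (hf : Differentiable ℝ f) (hg : Differentiable ℝ g) :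
    pdV (f * g) = fun p => pdV f p * g p + f p * pdV g p := by
  funext p
  have : (fun v : ℝ => (f * g) (v, p.2.1, p.2.2))
      = fun v => f (v, p.2.1, p.2.2) * g (v, p.2.1, p.2.2) := rfl
  rw [pdV, this, deriv_fun_mul (sliceV_diff hf p) (sliceV_diff hg p)]
  have h1 : (p.1, p.2.1, p.2.2) = p := by simp
  rw [h1]; rfl

lemma pdPhi_mul {f g : P3 → ℂ} (hf : Differentiable ℝ f) (hg : Differentiable ℝ g) :
    pdPhi (f * g) = fun p => pdPhi f p * g p + f p * pdPhi g p := by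
  funext p
  have : (fun s : ℝ => (f * g) (p.1, p.2.1, s))
      = fun s => f (p.1, p.2.1, s) * g (p.1, p.2.1, s) := rfl
  rw [pdPhi, this, deriv_fun_mul (slicePhi_diff hf p) (slicePhi_diff hg p)]
  have h1 : (p.1, p.2.1, p.2.2) = p := by simp
  rw [h1]; rfl

-- euler-pdPhi commutation (given pdPhi_pdV_comm proved elsewhere)
lemma pdPhi_euler_comm {f : P3 → ℂ} (h : pdPhi (pdV f) = pdV (pdPhi f)) :
    pdPhi (euler f) = euler (pdPhi f) := by
  funext p
  have : (fun s : ℝ => euler f (p.1, p.2.1, s))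
      = fun s => (p.1 : ℂ) * pdV f (p.1, p.2.1, s) := rfl
  rw [pdPhi, this, deriv_const_mul_field]
  have : deriv (fun s : ℝ => pdV f (p.1, p.2.1, s)) p.2.2 = pdPhi (pdV f) p := rfl
  rw [this, h]; rfl

lemma euler_add {f g : P3 → ℂ} (hf : Differentiable ℝ f) (hg : Differentiable ℝ g) :
    euler (f + g) = fun p => euler f p + euler g p := by
  funext p; rw [euler, pdV_add hf hg]; simp [euler]; ring

lemma euler_smul (c : ℂ) (f : P3 → ℂ) : euler (c • f) = fun p => c * euler f p := by
  funext p; rw [euler, pdV_smul]; simp [euler]; ring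

lemma euler_mul {f g : P3 → ℂ} (hf : Differentiable ℝ f) (hg : Differentiable ℝ g) :
    euler (f * g) = fun p => euler f p * g p + f p * euler g p := by
  funext p; rw [euler, pdV_mul hf hg]; simp [euler]; ring

-- Dop on tensors (no hypotheses needed)
lemma pdEta_tensor (f g : P3 → ℂ) : pdEta (tensorF f g) = fun q => f q.1 * pdPhi g q.2 := by
  funext q
  rw [pdEta]
  have : (fun s : ℝ => tensorF f g (q.1, (q.2.1, q.2.2.1, s)))
      = fun s => f q.1 * g (q.2.1, q.2.2.1, s) := rfl
  rw [this, deriv_const_mul_field]; rfl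

lemma pdXi_tensor (f g : P3 → ℂ) : pdXi (tensorF f g) = fun q => pdPhi f q.1 * g q.2 := by
  funext q
  rw [pdXi]
  have : (fun s : ℝ => tensorF f g ((q.1.1, q.1.2.1, s), q.2))
      = fun s => f (q.1.1, q.1.2.1, s) * g q.2 := rfl
  rw [this, deriv_mul_const_field]; rfl

lemma Dop_tensor (f g : P3 → ℂ) :
    Dop (tensorF f g) = fun q => euler f q.1 * pdPhi g q.2 - pdPhi f q.1 * euler g q.2 := by
  funext q
  rw [Dop, pdEta_tensor, pdXi_tensor]
  have h1 : pdX (fun q => f q.1 * pdPhi g q.2) q = pdV f q.1 * pdPhi g q.2 := by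
    rw [pdX]
    show deriv (fun x : ℝ => f (x, q.1.2.1, q.1.2.2) * pdPhi g q.2) q.1.1 = _
    rw [deriv_mul_const_field]; rfl
  have h2 : pdY (fun q => pdPhi f q.1 * g q.2) q = pdPhi f q.1 * pdV g q.2 := by
    rw [pdY]
    show deriv (fun y : ℝ => pdPhi f q.1 * g (y, q.2.2.1, q.2.2.2)) q.2.1 = _
    rw [deriv_const_mul_field]; rfl
  rw [h1, h2, euler, euler]; ring


lemma curveX (q : Q6) : HasDerivAt (fun x : ℝ => (((x, q.1.2.1, q.1.2.2), q.2) : Q6))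
    (((1, 0, 0) : P3), (0 : P3)) q.1.1 := by
  have h1 : HasDerivAt (fun x : ℝ => ((x, q.1.2.1, q.1.2.2) : P3)) (1, 0, 0) q.1.1 := by
    have := HasDerivAt.prodMk (hasDerivAt_id q.1.1) (hasDerivAt_const q.1.1 ((q.1.2.1, q.1.2.2) : ℝ × ℝ))
    exact this
  simpa using HasDerivAt.prodMk h1 (hasDerivAt_const q.1.1 q.2)

lemma curveXi (q : Q6) : HasDerivAt (fun s : ℝ => (((q.1.1, q.1.2.1, s), q.2) : Q6))
    (((0, 0, 1) : P3), (0 : P3)) q.1.2.2 := by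
  have h1 : HasDerivAt (fun s : ℝ => ((q.1.1, q.1.2.1, s) : P3)) (0, 0, 1) q.1.2.2 := by
    have := HasDerivAt.prodMk (hasDerivAt_const q.1.2.2 q.1.1)
      (HasDerivAt.prodMk (hasDerivAt_const q.1.2.2 q.1.2.1) (hasDerivAt_id q.1.2.2))
    simpa using this
  simpa using HasDerivAt.prodMk h1 (hasDerivAt_const q.1.2.2 q.2)

lemma curveY (q : Q6) : HasDerivAt (fun y : ℝ => ((q.1, (y, q.2.2.1, q.2.2.2)) : Q6))
    ((0 : P3), ((1, 0, 0) : P3)) q.2.1 := by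
  have h1 : HasDerivAt (fun y : ℝ => ((y, q.2.2.1, q.2.2.2) : P3)) (1, 0, 0) q.2.1 := by
    have := HasDerivAt.prodMk (hasDerivAt_id q.2.1) (hasDerivAt_const q.2.1 ((q.2.2.1, q.2.2.2) : ℝ × ℝ))
    exact this
  simpa using HasDerivAt.prodMk (hasDerivAt_const q.2.1 q.1) h1

lemma curveEta (q : Q6) : HasDerivAt (fun s : ℝ => ((q.1, (q.2.1, q.2.2.1, s)) : Q6))
    ((0 : P3), ((0, 0, 1) : P3)) q.2.2.2 := by
  have h1 : HasDerivAt (fun s : ℝ => ((q.2.1, q.2.2.1, s) : P3)) (0, 0, 1) q.2.2.2 := by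
    have := HasDerivAt.prodMk (hasDerivAt_const q.2.2.2 q.2.1)
      (HasDerivAt.prodMk (hasDerivAt_const q.2.2.2 q.2.2.1) (hasDerivAt_id q.2.2.2))
    simpa using this
  simpa using HasDerivAt.prodMk (hasDerivAt_const q.2.2.2 q.1) h1

lemma pdEta_eq {u : Q6 → ℂ} {q : Q6} (hu : DifferentiableAt ℝ u q) :
    pdEta u q = fderiv ℝ u q ((0 : P3), ((0, 0, 1) : P3)) := by
  have := deriv_along u (c := fun s : ℝ => ((q.1, (q.2.1, q.2.2.1, s)) : Q6))
    (by simpa using hu) (curveEta q)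
  simpa [pdEta] using this

lemma pdXi_eq {u : Q6 → ℂ} {q : Q6} (hu : DifferentiableAt ℝ u q) :
    pdXi u q = fderiv ℝ u q (((0, 0, 1) : P3), (0 : P3)) := by
  have := deriv_along u (c := fun s : ℝ => (((q.1.1, q.1.2.1, s), q.2) : Q6))
    (by simpa using hu) (curveXi q)
  simpa [pdXi] using this

lemma smooth_pdEta {u : Q6 → ℂ} (hu : ContDiff ℝ (⊤ : ℕ∞) u) : ContDiff ℝ (⊤ : ℕ∞) (pdEta u) := by
  have : pdEta u = fun q => fderiv ℝ u q ((0 : P3), ((0, 0, 1) : P3)) := by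
    funext q; exact pdEta_eq (hu.differentiable (by simp) q)
  rw [this]; exact (hu.fderiv_right (by simp)).clm_apply contDiff_const

lemma smooth_pdXi {u : Q6 → ℂ} (hu : ContDiff ℝ (⊤ : ℕ∞) u) : ContDiff ℝ (⊤ : ℕ∞) (pdXi u) := by
  have : pdXi u = fun q => fderiv ℝ u q (((0, 0, 1) : P3), (0 : P3)) := by
    funext q; exact pdXi_eq (hu.differentiable (by simp) q)
  rw [this]; exact (hu.fderiv_right (by simp)).clm_apply contDiff_const

-- additivity
lemma pdEta_add {u v : Q6 → ℂ} (hu : Differentiable ℝ u) (hv : Differentiable ℝ v) :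
    pdEta (u + v) = fun q => pdEta u q + pdEta v q := by
  funext q
  have hu' : DifferentiableAt ℝ (fun s : ℝ => u (q.1, (q.2.1, q.2.2.1, s))) q.2.2.2 := by
    have : DifferentiableAt ℝ u ((fun s : ℝ => ((q.1, (q.2.1, q.2.2.1, s)) : Q6)) q.2.2.2) := by
      simpa using hu _
    have h := this.comp q.2.2.2 (curveEta q).differentiableAt
    exact h
  have hv' : DifferentiableAt ℝ (fun s : ℝ => v (q.1, (q.2.1, q.2.2.1, s))) q.2.2.2 := by
    have : DifferentiableAt ℝ v ((fun s : ℝ => ((q.1, (q.2.1, q.2.2.1, s)) : Q6)) q.2.2.2) := by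
      simpa using hv _
    have h := this.comp q.2.2.2 (curveEta q).differentiableAt
    exact h
  have : (fun s : ℝ => (u + v) (q.1, (q.2.1, q.2.2.1, s)))
      = fun s => u (q.1, (q.2.1, q.2.2.1, s)) + v (q.1, (q.2.1, q.2.2.1, s)) := rfl
  rw [pdEta, this, deriv_fun_add hu' hv']; rfl

lemma pdXi_add {u v : Q6 → ℂ} (hu : Differentiable ℝ u) (hv : Differentiable ℝ v) :
    pdXi (u + v) = fun q => pdXi u q + pdXi v q := by
  funext q
  have hu' : DifferentiableAt ℝ (fun s : ℝ => u ((q.1.1, q.1.2.1, s), q.2)) q.1.2.2 := by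
    have : DifferentiableAt ℝ u ((fun s : ℝ => (((q.1.1, q.1.2.1, s), q.2) : Q6)) q.1.2.2) := by
      simpa using hu _
    have h := this.comp q.1.2.2 (curveXi q).differentiableAt
    exact h
  have hv' : DifferentiableAt ℝ (fun s : ℝ => v ((q.1.1, q.1.2.1, s), q.2)) q.1.2.2 := by
    have : DifferentiableAt ℝ v ((fun s : ℝ => (((q.1.1, q.1.2.1, s), q.2) : Q6)) q.1.2.2) := by
      simpa using hv _
    have h := this.comp q.1.2.2 (curveXi q).differentiableAt
    exact h
  have : (fun s : ℝ => (u + v) ((q.1.1, q.1.2.1, s), q.2))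
      = fun s => u ((q.1.1, q.1.2.1, s), q.2) + v ((q.1.1, q.1.2.1, s), q.2) := rfl
  rw [pdXi, this, deriv_fun_add hu' hv']; rfl

lemma pdX_add_at {w₁ w₂ : Q6 → ℂ} (q : Q6)
    (h1 : DifferentiableAt ℝ (fun x : ℝ => w₁ ((x, q.1.2.1, q.1.2.2), q.2)) q.1.1)
    (h2 : DifferentiableAt ℝ (fun x : ℝ => w₂ ((x, q.1.2.1, q.1.2.2), q.2)) q.1.1) :
    pdX (fun r => w₁ r + w₂ r) q = pdX w₁ q + pdX w₂ q := by
  rw [pdX, pdX, pdX]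
  exact deriv_fun_add h1 h2

lemma pdY_add_at {w₁ w₂ : Q6 → ℂ} (q : Q6)
    (h1 : DifferentiableAt ℝ (fun y : ℝ => w₁ (q.1, (y, q.2.2.1, q.2.2.2))) q.2.1)
    (h2 : DifferentiableAt ℝ (fun y : ℝ => w₂ (q.1, (y, q.2.2.1, q.2.2.2))) q.2.1) :
    pdY (fun r => w₁ r + w₂ r) q = pdY w₁ q + pdY w₂ q := by
  rw [pdY, pdY, pdY]
  exact deriv_fun_add h1 h2

lemma Dop_add {u v : Q6 → ℂ} (hu : ContDiff ℝ (⊤ : ℕ∞) u) (hv : ContDiff ℝ (⊤ : ℕ∞) v) :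
    Dop (u + v) = fun q => Dop u q + Dop v q := by
  funext q
  have hEu : ContDiff ℝ (⊤ : ℕ∞) (pdEta u) := smooth_pdEta hu
  have hEv : ContDiff ℝ (⊤ : ℕ∞) (pdEta v) := smooth_pdEta hv
  have hXu : ContDiff ℝ (⊤ : ℕ∞) (pdXi u) := smooth_pdXi hu
  have hXv : ContDiff ℝ (⊤ : ℕ∞) (pdXi v) := smooth_pdXi hv
  have e1 : pdEta (u + v) = fun q => pdEta u q + pdEta v q :=
    pdEta_add (hu.differentiable (by simp)) (hv.differentiable (by simp))
  have e2 : pdXi (u + v) = fun q => pdXi u q + pdXi v q :=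
    pdXi_add (hu.differentiable (by simp)) (hv.differentiable (by simp))
  have hX : pdX (pdEta (u + v)) q = pdX (pdEta u) q + pdX (pdEta v) q := by
    rw [e1]
    refine pdX_add_at q ?_ ?_
    · exact (((hEu.differentiable (by simp)) _).comp q.1.1 (curveX q).differentiableAt : _)
    · exact (((hEv.differentiable (by simp)) _).comp q.1.1 (curveX q).differentiableAt : _)
  have hY : pdY (pdXi (u + v)) q = pdY (pdXi u) q + pdY (pdXi v) q := by
    rw [e2]
    refine pdY_add_at q ?_ ?_
    · exact (((hXu.differentiable (by simp)) _).comp q.2.1 (curveY q).differentiableAt : _)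
    · exact (((hXv.differentiable (by simp)) _).comp q.2.1 (curveY q).differentiableAt : _)
  simp only [Dop]
  rw [hX, hY]; ring

lemma Dop_zero : Dop (0 : Q6 → ℂ) = 0 := by
  funext q
  have h1 : pdEta (0 : Q6 → ℂ) = 0 := by
    funext r; rw [pdEta]; exact deriv_const _ _
  have h2 : pdXi (0 : Q6 → ℂ) = 0 := by
    funext r; rw [pdXi]; exact deriv_const _ _
  rw [Dop, h1, h2]
  have h3 : pdX (0 : Q6 → ℂ) q = 0 := by rw [pdX]; exact deriv_const _ _
  have h4 : pdY (0 : Q6 → ℂ) q = 0 := by rw [pdY]; exact deriv_const _ _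
  rw [h3, h4]; simp

section SmAlg
open TensorProduct

def Sm : Subalgebra ℂ (P3 → ℂ) where
  carrier := {f | ContDiff ℝ (⊤ : ℕ∞) f}
  mul_mem' := fun {a b} (hf : ContDiff ℝ (⊤ : ℕ∞) a) (hg : ContDiff ℝ (⊤ : ℕ∞) b) => hf.mul hg
  add_mem' := fun {a b} (hf : ContDiff ℝ (⊤ : ℕ∞) a) (hg : ContDiff ℝ (⊤ : ℕ∞) b) => hf.add hg
  algebraMap_mem' := fun c => show ContDiff ℝ (⊤ : ℕ∞) (fun _ : P3 => c) from contDiff_const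

lemma Sm_mem {f : P3 → ℂ} : f ∈ Sm ↔ ContDiff ℝ (⊤ : ℕ∞) f := Iff.rfl

instance iSm1 : CommRing Sm := inferInstance
instance iSm2 : Algebra ℂ Sm := inferInstance
instance iSm3 : AddCommGroup Sm := inferInstance
instance iSm4 : Module ℂ Sm := inferInstance

def Eop : Module.End ℂ Sm where
  toFun f := ⟨euler f.1, smooth_euler (Sm_mem.1 f.2)⟩
  map_add' f g := by
    apply Subtype.ext
    show euler ((f : P3 → ℂ) + (g : P3 → ℂ)) = euler f.1 + euler g.1
    rw [euler_add ((Sm_mem.1 f.2).differentiable (by simp)) ((Sm_mem.1 g.2).differentiable (by simp))]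
    rfl
  map_smul' c f := by
    apply Subtype.ext
    show euler (c • (f : P3 → ℂ)) = c • euler f.1
    rw [euler_smul]
    rfl

def Pop : Module.End ℂ Sm where
  toFun f := ⟨pdPhi f.1, smooth_pdPhi (Sm_mem.1 f.2)⟩
  map_add' f g := by
    apply Subtype.ext
    show pdPhi ((f : P3 → ℂ) + (g : P3 → ℂ)) = pdPhi f.1 + pdPhi g.1
    rw [pdPhi_add ((Sm_mem.1 f.2).differentiable (by simp)) ((Sm_mem.1 g.2).differentiable (by simp))]
    rfl
  map_smul' c f := by
    apply Subtype.ext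
    show pdPhi (c • (f : P3 → ℂ)) = c • pdPhi f.1
    rw [pdPhi_smul]
    rfl

lemma Eop_apply (f : Sm) : (Eop f : P3 → ℂ) = euler f.1 := rfl
lemma Pop_apply (f : Sm) : (Pop f : P3 → ℂ) = pdPhi f.1 := rfl

lemma EP_comm : Eop * Pop = Pop * Eop := by
  apply LinearMap.ext
  intro f
  apply Subtype.ext
  show euler (pdPhi f.1) = pdPhi (euler f.1)
  rw [pdPhi_euler_comm (pdPhi_pdV_comm (Sm_mem.1 f.2))]

lemma Eop_mul (f g : Sm) : Eop (f * g) = Eop f * g + f * Eop g := by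
  apply Subtype.ext
  show euler ((f : P3 → ℂ) * (g : P3 → ℂ)) = euler f.1 * (g : P3 → ℂ) + (f : P3 → ℂ) * euler g.1
  rw [euler_mul ((Sm_mem.1 f.2).differentiable (by simp)) ((Sm_mem.1 g.2).differentiable (by simp))]
  rfl

lemma Pop_mul (f g : Sm) : Pop (f * g) = Pop f * g + f * Pop g := by
  apply Subtype.ext
  show pdPhi ((f : P3 → ℂ) * (g : P3 → ℂ)) = pdPhi f.1 * (g : P3 → ℂ) + (f : P3 → ℂ) * pdPhi g.1
  rw [pdPhi_mul ((Sm_mem.1 f.2).differentiable (by simp)) ((Sm_mem.1 g.2).differentiable (by simp))]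
  rfl

-- two-slot tensor algebra
abbrev B2 := TensorProduct ℂ Sm Sm
instance iB2a : AddCommGroup B2 := inferInstance
instance iB2m : Module ℂ B2 := inferInstance
def mu2 : B2 →ₗ[ℂ] Sm := LinearMap.mul' ℂ Sm
def Dt : Module.End ℂ B2 := TensorProduct.map Eop Pop - TensorProduct.map Pop Eop

def bilT : Sm →ₗ[ℂ] Sm →ₗ[ℂ] (P3 × P3 → ℂ) :=
  LinearMap.mk₂ ℂ (fun a b => tensorF a.1 b.1)
    (fun a a' b => by funext q; show (((a : P3 → ℂ) + a') q.1) * _ = _; simp [tensorF]; ring)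
    (fun c a b => by funext q; show ((c • (a : P3 → ℂ)) q.1) * _ = _; simp [tensorF]; ring)
    (fun a b b' => by funext q; show _ * (((b : P3 → ℂ) + b') q.2) = _; simp [tensorF]; ring)
    (fun c a b => by funext q; show _ * ((c • (b : P3 → ℂ)) q.2) = _; simp [tensorF]; ring)

def Phi : B2 →ₗ[ℂ] (P3 × P3 → ℂ) := TensorProduct.lift bilT

lemma Phi_tmul (a b : Sm) : Phi (a ⊗ₜ[ℂ] b) = tensorF a.1 b.1 := TensorProduct.lift.tmul a b

lemma smooth_Phi (t : B2) : ContDiff ℝ (⊤ : ℕ∞) (Phi t) := by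
  induction t using TensorProduct.induction_on with
  | zero => rw [map_zero]; exact contDiff_const
  | tmul a b =>
      rw [Phi_tmul]
      exact ((Sm_mem.1 a.2).comp contDiff_fst).mul ((Sm_mem.1 b.2).comp contDiff_snd)
  | add x y hx hy => rw [map_add]; exact hx.add hy

lemma Dop_Phi (t : B2) : Dop (Phi t) = Phi (Dt t) := by
  induction t using TensorProduct.induction_on with
  | zero => simp only [map_zero]; exact Dop_zero
  | tmul a b =>
      rw [Phi_tmul, Dop_tensor]
      have h : Dt (a ⊗ₜ[ℂ] b) = (Eop a) ⊗ₜ[ℂ] (Pop b) - (Pop a) ⊗ₜ[ℂ] (Eop b) := by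
        simp [Dt, TensorProduct.map_tmul, LinearMap.sub_apply]
      rw [h, map_sub, Phi_tmul, Phi_tmul]
      funext q
      rfl
  | add x y hx hy =>
      simp only [map_add]
      funext q
      have h := congrFun (Dop_add (smooth_Phi x) (smooth_Phi y)) q
      calc Dop (Phi x + Phi y) q = Dop (Phi x) q + Dop (Phi y) q := h
        _ = Phi (Dt x) q + Phi (Dt y) q := by rw [hx, hy]
        _ = (Phi (Dt x) + Phi (Dt y)) q := rfl

lemma Dop_iter_Phi (k : ℕ) (t : B2) : Dop^[k] (Phi t) = Phi ((Dt ^ k) t) := by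
  induction k with
  | zero => simp
  | succ n ih =>
      rw [Function.iterate_succ_apply', ih, Dop_Phi, ← Module.End.mul_apply, ← pow_succ']

lemma Phi_diag (t : B2) (p : P3) : Phi t (p, p) = (mu2 t : P3 → ℂ) p := by
  induction t using TensorProduct.induction_on with
  | zero => simp [mu2]
  | tmul a b =>
      rw [Phi_tmul]
      show a.1 p * b.1 p = _
      rw [mu2, LinearMap.mul'_apply]
      rfl
  | add x y hx hy =>
      rw [map_add, map_add]
      show Phi x (p, p) + Phi y (p, p) = ((mu2 x : P3 → ℂ) + (mu2 y : P3 → ℂ)) p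
      rw [hx, hy]
      rfl

def Cop (k : ℕ) (F G : Sm) : Sm :=
  (Complex.I ^ k / (Nat.factorial k : ℂ)) • mu2 ((Dt ^ k) (F ⊗ₜ[ℂ] G))

lemma bridge (k : ℕ) (F G : Sm) : coeffC k F.1 G.1 = (Cop k F G : P3 → ℂ) := by
  funext p
  show (Complex.I ^ k / (Nat.factorial k : ℂ)) * (Dop^[k] (tensorF F.1 G.1)) (p, p)
      = (Cop k F G : P3 → ℂ) p
  have h1 : tensorF F.1 G.1 = Phi (F ⊗ₜ[ℂ] G) := (Phi_tmul F G).symm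
  rw [h1, Dop_iter_Phi, Phi_diag]
  show _ = ((Complex.I ^ k / (Nat.factorial k : ℂ)) • (mu2 ((Dt ^ k) (F ⊗ₜ[ℂ] G)) : P3 → ℂ)) p
  rfl

end SmAlg


section Triple
open TensorProduct

lemma coef_id (m n l : ℕ) :
    (((m+n).factorial : ℂ) * (l.factorial : ℂ))⁻¹ * ((m+n).choose m : ℂ)
      = ((m.factorial : ℂ) * (n.factorial : ℂ) * (l.factorial : ℂ))⁻¹ := by
  have h : (((m+n).choose m : ℕ) : ℂ)
      = ((m+n).factorial : ℂ) / ((m.factorial : ℂ) * (((m+n)-m).factorial : ℂ)) :=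
    Nat.cast_choose ℂ (Nat.le_add_right m n)
  simp only [Nat.add_sub_cancel_left] at h
  rw [h]
  have h0 : (((m+n).factorial : ℂ)) ≠ 0 := Nat.cast_ne_zero.2 (Nat.factorial_ne_zero _)
  have h1 : ((m.factorial : ℂ)) ≠ 0 := Nat.cast_ne_zero.2 (Nat.factorial_ne_zero _)
  have h2 : ((n.factorial : ℂ)) ≠ 0 := Nat.cast_ne_zero.2 (Nat.factorial_ne_zero _)
  have h3 : ((l.factorial : ℂ)) ≠ 0 := Nat.cast_ne_zero.2 (Nat.factorial_ne_zero _)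
  field_simp

lemma core_sum {R : Type*} [Ring R] [Algebra ℂ R] (a b c : R)
    (hab : Commute a b) (hac : Commute a c) (hbc : Commute b c) (k : ℕ) :
    ∑ jl ∈ Finset.HasAntidiagonal.antidiagonal k,
        (((jl.1.factorial : ℂ) * (jl.2.factorial : ℂ))⁻¹) • ((b + c) ^ jl.1 * a ^ jl.2)
    = ∑ jl ∈ Finset.HasAntidiagonal.antidiagonal k,
        (((jl.1.factorial : ℂ) * (jl.2.factorial : ℂ))⁻¹) • ((a + b) ^ jl.1 * c ^ jl.2) := by
  have expandL : ∀ jl : ℕ × ℕ,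
      (((jl.1.factorial : ℂ) * (jl.2.factorial : ℂ))⁻¹) • ((b + c) ^ jl.1 * a ^ jl.2)
      = ∑ mn ∈ Finset.HasAntidiagonal.antidiagonal jl.1,
          (((mn.1.factorial : ℂ) * (mn.2.factorial : ℂ) * (jl.2.factorial : ℂ))⁻¹)
            • (a ^ jl.2 * b ^ mn.1 * c ^ mn.2) := by
    rintro ⟨j, l⟩
    rw [hbc.add_pow', Finset.sum_mul, Finset.smul_sum]
    refine Finset.sum_congr rfl ?_
    rintro ⟨m, n⟩ hmn
    rw [Finset.HasAntidiagonal.mem_antidiagonal] at hmn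
    dsimp only
    have hre : b ^ m * c ^ n * a ^ l = a ^ l * b ^ m * c ^ n := by
      rw [((hab.symm.pow_pow m l).mul_left (hac.symm.pow_pow n l)).eq, ← mul_assoc]
    rw [smul_mul_assoc, ← Nat.cast_smul_eq_nsmul ℂ, smul_smul, hre]
    subst hmn
    rw [coef_id]
  have expandR : ∀ jl : ℕ × ℕ,
      (((jl.1.factorial : ℂ) * (jl.2.factorial : ℂ))⁻¹) • ((a + b) ^ jl.1 * c ^ jl.2)
      = ∑ mn ∈ Finset.HasAntidiagonal.antidiagonal jl.1,
          (((mn.1.factorial : ℂ) * (mn.2.factorial : ℂ) * (jl.2.factorial : ℂ))⁻¹)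
            • (a ^ mn.1 * b ^ mn.2 * c ^ jl.2) := by
    rintro ⟨j, l⟩
    rw [hab.add_pow', Finset.sum_mul, Finset.smul_sum]
    refine Finset.sum_congr rfl ?_
    rintro ⟨m, n⟩ hmn
    rw [Finset.HasAntidiagonal.mem_antidiagonal] at hmn
    dsimp only
    rw [smul_mul_assoc, ← Nat.cast_smul_eq_nsmul ℂ, smul_smul]
    subst hmn
    rw [coef_id]
  rw [Finset.sum_congr rfl (fun jl _ => expandL jl),
      Finset.sum_congr rfl (fun jl _ => expandR jl),
      Finset.sum_sigma' (Finset.HasAntidiagonal.antidiagonal k) (fun jl => Finset.HasAntidiagonal.antidiagonal jl.1),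
      Finset.sum_sigma' (Finset.HasAntidiagonal.antidiagonal k) (fun jl => Finset.HasAntidiagonal.antidiagonal jl.1)]
  refine Finset.sum_nbij' (fun x => ⟨(x.1.2 + x.2.1, x.2.2), (x.1.2, x.2.1)⟩)
    (fun x => ⟨(x.2.2 + x.1.2, x.2.1), (x.2.2, x.1.2)⟩) ?_ ?_ ?_ ?_ ?_
  · rintro ⟨⟨j, l⟩, ⟨m, n⟩⟩ hx
    simp only [Finset.mem_sigma, Finset.HasAntidiagonal.mem_antidiagonal, and_true, true_and] at hx ⊢
    omega
  · rintro ⟨⟨j, l⟩, ⟨m, n⟩⟩ hx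
    simp only [Finset.mem_sigma, Finset.HasAntidiagonal.mem_antidiagonal, and_true, true_and] at hx ⊢
    omega
  · rintro ⟨⟨j, l⟩, ⟨m, n⟩⟩ hx
    simp only [Finset.mem_sigma, Finset.HasAntidiagonal.mem_antidiagonal] at hx
    simp only [Sigma.mk.inj_iff, Prod.mk.injEq, heq_eq_eq, and_true, true_and]
    omega
  · rintro ⟨⟨j, l⟩, ⟨m, n⟩⟩ hx
    simp only [Finset.mem_sigma, Finset.HasAntidiagonal.mem_antidiagonal] at hx
    simp only [Sigma.mk.inj_iff, Prod.mk.injEq, heq_eq_eq, and_true, true_and]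
    omega
  · rintro ⟨⟨j, l⟩, ⟨m, n⟩⟩ hx
    dsimp only
    congr 1
    ring

abbrev B3 := TensorProduct ℂ B2 Sm
instance iB3a : AddCommGroup B3 := inferInstance
instance iB3m : Module ℂ B3 := inferInstance
abbrev B3' := TensorProduct ℂ Sm B2
instance iB3a' : AddCommGroup B3' := inferInstance
instance iB3m' : Module ℂ B3' := inferInstance

def M3 (A B C : Module.End ℂ Sm) : Module.End ℂ B3 :=
  TensorProduct.map (TensorProduct.map A B) C
def M3' (A B C : Module.End ℂ Sm) : Module.End ℂ B3' :=
  TensorProduct.map A (TensorProduct.map B C)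

lemma map_sub_left {M N : Type*} [AddCommGroup M] [AddCommGroup N] [Module ℂ M] [Module ℂ N]
    (f g : M →ₗ[ℂ] M) (h : N →ₗ[ℂ] N) :
    TensorProduct.map (f - g) h = TensorProduct.map f h - TensorProduct.map g h := by
  have := TensorProduct.map_add_left (R := ℂ) (f₁ := f - g) (f₂ := g) (g := h)
  rw [sub_add_cancel] at this
  rw [this]; abel

lemma map_sub_right {M N : Type*} [AddCommGroup M] [AddCommGroup N] [Module ℂ M] [Module ℂ N]
    (f : M →ₗ[ℂ] M) (g h : N →ₗ[ℂ] N) :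
    TensorProduct.map f (g - h) = TensorProduct.map f g - TensorProduct.map f h := by
  have := TensorProduct.map_add_right (R := ℂ) (f := f) (g₁ := g - h) (g₂ := h)
  rw [sub_add_cancel] at this
  rw [this]; abel

def D12 : Module.End ℂ B3 := TensorProduct.map Dt 1
def D13 : Module.End ℂ B3 := M3 Eop 1 Pop - M3 Pop 1 Eop
def D23 : Module.End ℂ B3 := M3 1 Eop Pop - M3 1 Pop Eop
def mu21 : B3 →ₗ[ℂ] B2 := TensorProduct.map mu2 1

def D12' : Module.End ℂ B3' := M3' Eop Pop 1 - M3' Pop Eop 1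
def D13' : Module.End ℂ B3' := M3' Eop 1 Pop - M3' Pop 1 Eop
def D23' : Module.End ℂ B3' := TensorProduct.map 1 Dt
def mu12' : B3' →ₗ[ℂ] B2 := TensorProduct.map 1 mu2

lemma D12_eq : D12 = M3 Eop Pop 1 - M3 Pop Eop 1 := by
  rw [D12, Dt, map_sub_left]; rfl

lemma D23'_eq : D23' = M3' 1 Eop Pop - M3' 1 Pop Eop := by
  rw [D23', Dt, map_sub_right]; rfl

lemma M3_mul (A B C A' B' C' : Module.End ℂ Sm) :
    M3 A B C * M3 A' B' C' = M3 (A * A') (B * B') (C * C') := by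
  show TensorProduct.map (TensorProduct.map A B) C ∘ₗ TensorProduct.map (TensorProduct.map A' B') C'
      = TensorProduct.map (TensorProduct.map (A ∘ₗ A') (B ∘ₗ B')) (C ∘ₗ C')
  rw [TensorProduct.map_comp, TensorProduct.map_comp]

lemma M3'_mul (A B C A' B' C' : Module.End ℂ Sm) :
    M3' A B C * M3' A' B' C' = M3' (A * A') (B * B') (C * C') := by
  show TensorProduct.map A (TensorProduct.map B C) ∘ₗ TensorProduct.map A' (TensorProduct.map B' C')
      = TensorProduct.map (A ∘ₗ A') (TensorProduct.map (B ∘ₗ B') (C ∘ₗ C'))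
  rw [TensorProduct.map_comp, TensorProduct.map_comp]

lemma comm_1213 : Commute D12 D13 := by
  show D12 * D13 = D13 * D12
  rw [D12_eq, D13]
  simp only [sub_mul, mul_sub, M3_mul, one_mul, mul_one, EP_comm]
  abel

lemma comm_1223 : Commute D12 D23 := by
  show D12 * D23 = D23 * D12
  rw [D12_eq, D23]
  simp only [sub_mul, mul_sub, M3_mul, one_mul, mul_one, EP_comm]
  abel

lemma comm_1323 : Commute D13 D23 := by
  show D13 * D23 = D23 * D13
  rw [D13, D23]
  simp only [sub_mul, mul_sub, M3_mul, one_mul, mul_one, EP_comm]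
  abel

end Triple


section Assemble
open TensorProduct

lemma inter_L : Dt ∘ₗ mu21 = mu21 ∘ₗ (D13 + D23) := by
  apply TensorProduct.ext_threefold
  intro a b c
  simp only [LinearMap.comp_apply, LinearMap.add_apply, LinearMap.sub_apply,
    Dt, mu21, D13, D23, M3, TensorProduct.map_tmul, Module.End.one_apply,
    mu2, LinearMap.mul'_apply, Eop_mul, Pop_mul,
    TensorProduct.add_tmul, TensorProduct.tmul_add, TensorProduct.sub_tmul,
    TensorProduct.tmul_sub, map_sub, map_add]
  abel

lemma ext_three' {Q : Type*} [AddCommGroup Q] [Module ℂ Q] {g h : B3' →ₗ[ℂ] Q}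
    (H : ∀ (a b c : Sm), g (a ⊗ₜ[ℂ] (b ⊗ₜ[ℂ] c)) = h (a ⊗ₜ[ℂ] (b ⊗ₜ[ℂ] c))) : g = h := by
  apply TensorProduct.ext'
  intro a t
  induction t using TensorProduct.induction_on with
  | zero => rw [TensorProduct.tmul_zero, map_zero, map_zero]
  | tmul b c => exact H a b c
  | add u v hu hv => rw [TensorProduct.tmul_add, map_add, map_add, hu, hv]

lemma inter_R : Dt ∘ₗ mu12' = mu12' ∘ₗ (D12' + D13') := by
  apply ext_three'
  intro a b c
  simp only [LinearMap.comp_apply, LinearMap.add_apply, LinearMap.sub_apply,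
    Dt, mu12', D12', D13', M3', TensorProduct.map_tmul, Module.End.one_apply,
    mu2, LinearMap.mul'_apply, Eop_mul, Pop_mul,
    TensorProduct.add_tmul, TensorProduct.tmul_add, TensorProduct.sub_tmul,
    TensorProduct.tmul_sub, map_sub, map_add]
  abel

lemma pow_inter {M N : Type*} [AddCommGroup M] [AddCommGroup N] [Module ℂ M] [Module ℂ N]
    (f : Module.End ℂ N) (g : Module.End ℂ M) (μ : M →ₗ[ℂ] N)
    (h : f ∘ₗ μ = μ ∘ₗ g) (n : ℕ) : (f ^ n) ∘ₗ μ = μ ∘ₗ (g ^ n) := by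
  induction n with
  | zero => rw [pow_zero, pow_zero]; rfl
  | succ n ih =>
      rw [pow_succ', pow_succ', Module.End.mul_eq_comp, Module.End.mul_eq_comp,
        LinearMap.comp_assoc, ih, ← LinearMap.comp_assoc, h, LinearMap.comp_assoc]

def aL : B3 →ₗ[ℂ] B3' := (TensorProduct.assoc ℂ Sm Sm Sm).toLinearMap

lemma aD12 : D12' ∘ₗ aL = aL ∘ₗ D12 := by
  apply TensorProduct.ext_threefold
  intro a b c
  simp only [LinearMap.comp_apply, LinearMap.sub_apply, aL, D12', D12, M3', Dt,
    TensorProduct.map_tmul, Module.End.one_apply, TensorProduct.sub_tmul,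
    TensorProduct.tmul_sub, map_sub, LinearEquiv.coe_coe, TensorProduct.assoc_tmul]

lemma aD13 : D13' ∘ₗ aL = aL ∘ₗ D13 := by
  apply TensorProduct.ext_threefold
  intro a b c
  simp only [LinearMap.comp_apply, LinearMap.sub_apply, aL, D13', D13, M3', M3,
    TensorProduct.map_tmul, Module.End.one_apply, TensorProduct.sub_tmul,
    TensorProduct.tmul_sub, map_sub, LinearEquiv.coe_coe, TensorProduct.assoc_tmul]

lemma aD23 : D23' ∘ₗ aL = aL ∘ₗ D23 := by
  apply TensorProduct.ext_threefold
  intro a b c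
  simp only [LinearMap.comp_apply, LinearMap.sub_apply, aL, D23'_eq, D23, M3', M3,
    TensorProduct.map_tmul, Module.End.one_apply, TensorProduct.sub_tmul,
    TensorProduct.tmul_sub, map_sub, LinearEquiv.coe_coe, TensorProduct.assoc_tmul]

lemma a_mu : (mu2 ∘ₗ mu12') ∘ₗ aL = mu2 ∘ₗ mu21 := by
  apply TensorProduct.ext_threefold
  intro a b c
  simp only [LinearMap.comp_apply, aL, mu12', mu21, mu2, TensorProduct.map_tmul,
    Module.End.one_apply, LinearMap.mul'_apply, LinearEquiv.coe_coe,
    TensorProduct.assoc_tmul, mul_assoc]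

lemma CopL (j l : ℕ) (F G H : Sm) :
    Cop j (Cop l F G) H
      = (Complex.I ^ (j + l) / ((j.factorial : ℂ) * (l.factorial : ℂ))) •
        mu2 (mu21 (((D13 + D23) ^ j) ((D12 ^ l) ((F ⊗ₜ[ℂ] G) ⊗ₜ[ℂ] H)))) := by
  have h1 : (Cop l F G) ⊗ₜ[ℂ] H
      = (Complex.I ^ l / (l.factorial : ℂ)) • mu21 ((D12 ^ l) ((F ⊗ₜ[ℂ] G) ⊗ₜ[ℂ] H)) := by
    rw [Cop, ← TensorProduct.smul_tmul']
    congr 1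
    have h2 : (D12 ^ l) ((F ⊗ₜ[ℂ] G) ⊗ₜ[ℂ] H) = ((Dt ^ l) (F ⊗ₜ[ℂ] G)) ⊗ₜ[ℂ] H := by
      rw [D12, TensorProduct.map_pow, one_pow, TensorProduct.map_tmul, Module.End.one_apply]
    rw [h2, mu21, TensorProduct.map_tmul, Module.End.one_apply]
  rw [Cop, h1, _root_.map_smul, _root_.map_smul, smul_smul]
  congr 1
  · rw [div_mul_div_comm, ← pow_add]
  · congr 1
    exact LinearMap.congr_fun (pow_inter Dt (D13 + D23) mu21 inter_L j) _

lemma CopR (j l : ℕ) (F G H : Sm) :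
    Cop j F (Cop l G H)
      = (Complex.I ^ (j + l) / ((j.factorial : ℂ) * (l.factorial : ℂ))) •
        mu2 (mu21 (((D12 + D13) ^ j) ((D23 ^ l) ((F ⊗ₜ[ℂ] G) ⊗ₜ[ℂ] H)))) := by
  have h1 : F ⊗ₜ[ℂ] (Cop l G H)
      = (Complex.I ^ l / (l.factorial : ℂ)) •
          mu12' ((D23' ^ l) (aL ((F ⊗ₜ[ℂ] G) ⊗ₜ[ℂ] H))) := by
    rw [Cop, TensorProduct.tmul_smul]
    congr 1
    have e1 : aL ((F ⊗ₜ[ℂ] G) ⊗ₜ[ℂ] H) = F ⊗ₜ[ℂ] (G ⊗ₜ[ℂ] H) := by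
      rw [aL]; exact TensorProduct.assoc_tmul F G H
    rw [e1]
    have e2 : (D23' ^ l) (F ⊗ₜ[ℂ] (G ⊗ₜ[ℂ] H)) = F ⊗ₜ[ℂ] ((Dt ^ l) (G ⊗ₜ[ℂ] H)) := by
      rw [D23', TensorProduct.map_pow, one_pow, TensorProduct.map_tmul, Module.End.one_apply]
    rw [e2, mu12', TensorProduct.map_tmul, Module.End.one_apply]
  rw [Cop, h1, _root_.map_smul, _root_.map_smul, smul_smul]
  congr 1
  · rw [div_mul_div_comm, ← pow_add]
  · have s1 : (Dt ^ j) (mu12' ((D23' ^ l) (aL ((F ⊗ₜ[ℂ] G) ⊗ₜ[ℂ] H))))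
        = mu12' (((D12' + D13') ^ j) ((D23' ^ l) (aL ((F ⊗ₜ[ℂ] G) ⊗ₜ[ℂ] H)))) :=
      LinearMap.congr_fun (pow_inter Dt (D12' + D13') mu12' inter_R j) _
    have s2 : (D23' ^ l) (aL ((F ⊗ₜ[ℂ] G) ⊗ₜ[ℂ] H))
        = aL ((D23 ^ l) ((F ⊗ₜ[ℂ] G) ⊗ₜ[ℂ] H)) :=
      LinearMap.congr_fun (pow_inter D23' D23 aL aD23 l) _
    have hadd : (D12' + D13') ∘ₗ aL = aL ∘ₗ (D12 + D13) := by
      rw [LinearMap.add_comp, LinearMap.comp_add, aD12, aD13]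
    have s3 : ((D12' + D13') ^ j) (aL ((D23 ^ l) ((F ⊗ₜ[ℂ] G) ⊗ₜ[ℂ] H)))
        = aL (((D12 + D13) ^ j) ((D23 ^ l) ((F ⊗ₜ[ℂ] G) ⊗ₜ[ℂ] H))) :=
      LinearMap.congr_fun (pow_inter (D12' + D13') (D12 + D13) aL hadd j) _
    rw [s1, s2, s3]
    exact LinearMap.congr_fun a_mu _

theorem Cop_assoc (F G H : Sm) (k : ℕ) :
    ∑ jl ∈ Finset.HasAntidiagonal.antidiagonal k, Cop jl.1 (Cop jl.2 F G) H
      = ∑ jl ∈ Finset.HasAntidiagonal.antidiagonal k, Cop jl.1 F (Cop jl.2 G H) := by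
  have hL : ∀ jl ∈ Finset.HasAntidiagonal.antidiagonal k,
      Cop jl.1 (Cop jl.2 F G) H
        = Complex.I ^ k •
            mu2 (mu21 ((((((jl.1.factorial : ℂ) * (jl.2.factorial : ℂ))⁻¹) •
              (((D13 + D23) ^ jl.1) * (D12 ^ jl.2))) ((F ⊗ₜ[ℂ] G) ⊗ₜ[ℂ] H)))) := by
    rintro ⟨j, l⟩ hmem
    rw [Finset.HasAntidiagonal.mem_antidiagonal] at hmem
    simp only at hmem
    rw [CopL]
    rw [LinearMap.smul_apply, Module.End.mul_apply, _root_.map_smul, _root_.map_smul, smul_smul,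
      hmem, div_eq_mul_inv]
  have hR : ∀ jl ∈ Finset.HasAntidiagonal.antidiagonal k,
      Cop jl.1 F (Cop jl.2 G H)
        = Complex.I ^ k •
            mu2 (mu21 ((((((jl.1.factorial : ℂ) * (jl.2.factorial : ℂ))⁻¹) •
              (((D12 + D13) ^ jl.1) * (D23 ^ jl.2))) ((F ⊗ₜ[ℂ] G) ⊗ₜ[ℂ] H)))) := by
    rintro ⟨j, l⟩ hmem
    rw [Finset.HasAntidiagonal.mem_antidiagonal] at hmem
    simp only at hmem
    rw [CopR]
    rw [LinearMap.smul_apply, Module.End.mul_apply, _root_.map_smul, _root_.map_smul, smul_smul,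
      hmem, div_eq_mul_inv]
  rw [Finset.sum_congr rfl hL, Finset.sum_congr rfl hR, ← Finset.smul_sum, ← Finset.smul_sum]
  congr 1
  rw [← map_sum, ← map_sum, ← LinearMap.sum_apply, ← map_sum, ← map_sum, ← LinearMap.sum_apply,
    core_sum D12 D13 D23 comm_1213 comm_1223 comm_1323 k]

end Assemble


/-- **Associativity of the deformed product as formal power series in θ**:
for every order k, Σ_{j+l=k} c_j(c_l(f,g),h) = Σ_{j+l=k} c_j(f,c_l(g,h)) on ℝ³. -/
theorem starN_formal_associative (f g h : P3 → ℂ)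
    (hf : ContDiff ℝ (⊤ : ℕ∞) f) (hg : ContDiff ℝ (⊤ : ℕ∞) g) (hh : ContDiff ℝ (⊤ : ℕ∞) h)
    (k : ℕ) (p : P3) :
    ∑ jl ∈ Finset.HasAntidiagonal.antidiagonal k, coeffC jl.1 (coeffC jl.2 f g) h p =
      ∑ jl ∈ Finset.HasAntidiagonal.antidiagonal k, coeffC jl.1 f (coeffC jl.2 g h) p := by
  have hL : ∀ jl : ℕ × ℕ, coeffC jl.1 (coeffC jl.2 f g) h p
      = ((Cop jl.1 (Cop jl.2 ⟨f, hf⟩ ⟨g, hg⟩) ⟨h, hh⟩ : Sm) : P3 → ℂ) p := by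
    intro jl
    have b1 : coeffC jl.2 f g = ((Cop jl.2 ⟨f, hf⟩ ⟨g, hg⟩ : Sm) : P3 → ℂ) :=
      bridge jl.2 ⟨f, hf⟩ ⟨g, hg⟩
    rw [b1]
    exact congrFun (bridge jl.1 (Cop jl.2 ⟨f, hf⟩ ⟨g, hg⟩) ⟨h, hh⟩) p
  have hR : ∀ jl : ℕ × ℕ, coeffC jl.1 f (coeffC jl.2 g h) p
      = ((Cop jl.1 ⟨f, hf⟩ (Cop jl.2 ⟨g, hg⟩ ⟨h, hh⟩) : Sm) : P3 → ℂ) p := by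
    intro jl
    have b1 : coeffC jl.2 g h = ((Cop jl.2 ⟨g, hg⟩ ⟨h, hh⟩ : Sm) : P3 → ℂ) :=
      bridge jl.2 ⟨g, hg⟩ ⟨h, hh⟩
    rw [b1]
    exact congrFun (bridge jl.1 ⟨f, hf⟩ (Cop jl.2 ⟨g, hg⟩ ⟨h, hh⟩)) p
  calc ∑ jl ∈ Finset.HasAntidiagonal.antidiagonal k, coeffC jl.1 (coeffC jl.2 f g) h p
      = ∑ jl ∈ Finset.HasAntidiagonal.antidiagonal k,
          ((Cop jl.1 (Cop jl.2 ⟨f, hf⟩ ⟨g, hg⟩) ⟨h, hh⟩ : Sm) : P3 → ℂ) p :=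
        Finset.sum_congr rfl (fun jl _ => hL jl)
    _ = (((∑ jl ∈ Finset.HasAntidiagonal.antidiagonal k,
          Cop jl.1 (Cop jl.2 ⟨f, hf⟩ ⟨g, hg⟩) ⟨h, hh⟩ : Sm)) : P3 → ℂ) p := by
        rw [AddSubmonoidClass.coe_finset_sum, Finset.sum_apply]
    _ = (((∑ jl ∈ Finset.HasAntidiagonal.antidiagonal k,
          Cop jl.1 ⟨f, hf⟩ (Cop jl.2 ⟨g, hg⟩ ⟨h, hh⟩) : Sm)) : P3 → ℂ) p := by
        rw [Cop_assoc]
    _ = ∑ jl ∈ Finset.HasAntidiagonal.antidiagonal k,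
          ((Cop jl.1 ⟨f, hf⟩ (Cop jl.2 ⟨g, hg⟩ ⟨h, hh⟩) : Sm) : P3 → ℂ) p := by
        rw [AddSubmonoidClass.coe_finset_sum, Finset.sum_apply]
    _ = ∑ jl ∈ Finset.HasAntidiagonal.antidiagonal k, coeffC jl.1 f (coeffC jl.2 g h) p :=
        (Finset.sum_congr rfl (fun jl _ => hR jl)).symm

end
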